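/- (Waypoint interpolation for single-integrator dynamics.) Let u_min, u_max, y0 be real numbers with 0 < u_min ≤ u_max, let N ≥ 0, let t : Fin (N+1) → ℝ be monotone nondecreasing with t(0) = 0, and let z : Fin (N+1) → ℝ with z(0) = y0 such that for every index k with k + 1 ≤ N, u_min · (t(k+1) − t(k)) ≤ z(k+1) − z(k) ≤ u_max · (t(k+1) − t(k)). Then there exists an admissible control u such that y0 + ∫₀^{t(k)} u(s) ds = z(k) for every k. -/

import Mathlib

/-!
The control is built one leg at a time. On the leg from `t k` to `t (k+1)` the constant speed
`(z (k+1) - z k) / (t (k+1) - t k)` lies in `[umin, umax]` by the compatibility condition and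
covers exactly the required distance; a degenerate leg has `z (k+1) = z k` and needs nothing.
Switching to the new constant after time `t k` does not change the trajectory up to `t k`, so
the earlier waypoints are still met.
-/

/-- An admissible control for speed bounds `0 < umin ≤ umax`: a measurable
function with values in `[umin, umax]` at all nonnegative times. -/
def Admissible (umin umax : ℝ) (u : ℝ → ℝ) : Prop :=
  Measurable u ∧ ∀ s : ℝ, 0 ≤ s → umin ≤ u s ∧ u s ≤ umax

open Set MeasureTheory

lemma exists_mem_Icc_mul_eq {a b d Δ : ℝ} (hab : a ≤ b) (hd : 0 ≤ d)
    (hlow : a * d ≤ Δ) (hup : Δ ≤ b * d) : ∃ c ∈ Icc a b, c * d = Δ := by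
  rcases hd.eq_or_lt with rfl | hd
  · exact ⟨a, ⟨le_rfl, hab⟩, by linarith⟩
  · exact ⟨Δ / d, ⟨(le_div_iff₀ hd).2 hlow, (div_le_iff₀ hd).2 hup⟩,
      div_mul_cancel₀ Δ hd.ne'⟩

section Piecewise

variable {f g : ℝ → ℝ} {T a b : ℝ}

lemma integral_piecewise_Iic_of_le (ha : a ≤ T) (hb : b ≤ T) :
    ∫ s in a..b, (Iic T).piecewise f g s = ∫ s in a..b, f s :=
  intervalIntegral.integral_congr fun _ hs =>
    piecewise_eq_of_mem _ _ _ (hs.2.trans (max_le ha hb))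

lemma integral_piecewise_Iic_of_ge (hb : T ≤ b) :
    ∫ s in T..b, (Iic T).piecewise f g s = ∫ s in T..b, g s := by
  refine intervalIntegral.integral_congr_ae (Filter.Eventually.of_forall fun s hs => ?_)
  rw [uIoc_of_le hb] at hs
  exact piecewise_eq_of_notMem _ _ _ (not_le.2 hs.1)

end Piecewise

namespace Admissible

variable {umin umax : ℝ} {u v : ℝ → ℝ}

lemma const {c : ℝ} (hc : c ∈ Icc umin umax) : Admissible umin umax fun _ => c :=
  ⟨measurable_const, fun _ _ => hc⟩

lemma piecewise_Iic (hu : Admissible umin umax u) (hv : Admissible umin umax v) (T : ℝ) :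
    Admissible umin umax ((Iic T).piecewise u v) := by
  refine ⟨hu.1.piecewise measurableSet_Iic hv.1, fun s hs => ?_⟩
  by_cases hsT : s ∈ Iic T
  · simpa [piecewise_eq_of_mem _ _ _ hsT] using hu.2 s hs
  · simpa [piecewise_eq_of_notMem _ _ _ hsT] using hv.2 s hs

lemma intervalIntegrable (hu : Admissible umin umax u) {a b : ℝ} (ha : 0 ≤ a) (hb : 0 ≤ b) :
    IntervalIntegrable u volume a b := by
  rw [intervalIntegrable_iff]
  refine Measure.integrableOn_of_bounded measure_Ioc_lt_top.ne hu.1.aestronglyMeasurable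
    (M := max |umin| |umax|) ?_
  filter_upwards [ae_restrict_mem measurableSet_uIoc] with s hs
  have hs0 : 0 ≤ s := (le_min ha hb).trans hs.1.le
  exact abs_le_max_abs_abs (hu.2 s hs0).1 (hu.2 s hs0).2

lemma integral_piecewise_Iic_const (hu : Admissible umin umax u) {c T b : ℝ}
    (hc : c ∈ Icc umin umax) (hT : 0 ≤ T) (hTb : T ≤ b) :
    ∫ s in (0 : ℝ)..b, (Iic T).piecewise u (fun _ => c) s =
      (∫ s in (0 : ℝ)..T, u s) + c * (b - T) := by
  have hu' := hu.piecewise_Iic (const hc) T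
  rw [← intervalIntegral.integral_add_adjacent_intervals (hu'.intervalIntegrable le_rfl hT)
    (hu'.intervalIntegrable hT (hT.trans hTb)), integral_piecewise_Iic_of_le hT le_rfl,
    integral_piecewise_Iic_of_ge hTb, intervalIntegral.integral_const, smul_eq_mul, mul_comm]

end Admissible

theorem exists_admissible_through_waypoints {umin umax : ℝ} (hbound : umin ≤ umax) {N : ℕ}
    {t z : Fin (N + 1) → ℝ} (hmono : Monotone t) (ht0 : t 0 = 0)
    (hstep : ∀ k : Fin N, umin * (t k.succ - t k.castSucc) ≤ z k.succ - z k.castSucc ∧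
      z k.succ - z k.castSucc ≤ umax * (t k.succ - t k.castSucc)) :
    ∃ u, Admissible umin umax u ∧ ∀ k, z 0 + ∫ s in (0 : ℝ)..t k, u s = z k := by
  induction N with
  | zero =>
    refine ⟨fun _ => umin, Admissible.const ⟨le_rfl, hbound⟩, fun k => ?_⟩
    simp [Fin.fin_one_eq_zero k, ht0]
  | succ N ih =>
    obtain ⟨u, hu, hreach⟩ := ih (t := t ∘ Fin.castSucc) (z := z ∘ Fin.castSucc)
      (hmono.comp Fin.strictMono_castSucc.monotone) ht0 fun k => by
        simpa only [Function.comp_apply, ← Fin.succ_castSucc] using hstep k.castSucc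
    simp only [Function.comp_apply, Fin.castSucc_zero] at hreach
    have ht_nonneg : ∀ k, 0 ≤ t k := fun k => ht0 ▸ hmono (Fin.zero_le k)
    obtain ⟨c, hc, hcΔ⟩ := exists_mem_Icc_mul_eq hbound
      (sub_nonneg.2 (hmono (Fin.castSucc_le_succ (Fin.last N)))) (hstep (Fin.last N)).1
      (hstep (Fin.last N)).2
    refine ⟨(Iic (t (Fin.last N).castSucc)).piecewise u fun _ => c,
      hu.piecewise_Iic (Admissible.const hc) _, Fin.lastCases ?_ fun k => ?_⟩
    · rw [← Fin.succ_last, hu.integral_piecewise_Iic_const hc (ht_nonneg _)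
        (hmono (Fin.castSucc_le_succ _)), hcΔ, ← add_assoc, hreach]
      ring
    · rw [integral_piecewise_Iic_of_le (ht_nonneg _)
        (hmono (Fin.castSucc_le_castSucc_iff.2 (Fin.le_last k))), hreach]

theorem waypoint_interpolation_general (umin umax y0 : ℝ)
    (hbound : umin ≤ umax)
    (N : ℕ) (t z : Fin (N + 1) → ℝ)
    (hmono : Monotone t) (ht0 : t 0 = 0) (hz0 : z 0 = y0)
    (hstep : ∀ k : ℕ, ∀ hk : k + 1 ≤ N,
      umin * (t ⟨k + 1, Nat.succ_lt_succ hk⟩ - t ⟨k, Nat.lt_succ_of_le (Nat.le_of_succ_le hk)⟩)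
          ≤ z ⟨k + 1, Nat.succ_lt_succ hk⟩ - z ⟨k, Nat.lt_succ_of_le (Nat.le_of_succ_le hk)⟩ ∧
        z ⟨k + 1, Nat.succ_lt_succ hk⟩ - z ⟨k, Nat.lt_succ_of_le (Nat.le_of_succ_le hk)⟩
          ≤ umax * (t ⟨k + 1, Nat.succ_lt_succ hk⟩ - t ⟨k, Nat.lt_succ_of_le (Nat.le_of_succ_le hk)⟩)) :
    ∃ u : ℝ → ℝ, Admissible umin umax u ∧
      ∀ k : Fin (N + 1), y0 + ∫ s in (0:ℝ)..t k, u s = z k := by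
  obtain ⟨u, hu, hreach⟩ :=
    exists_admissible_through_waypoints hbound hmono ht0 fun k => hstep k k.2
  exact ⟨u, hu, fun k => hz0 ▸ hreach k⟩

/-- Waypoint interpolation for single-integrator dynamics: if consecutive
time–position waypoints are compatible with the speed bounds, then there is a
single admissible control whose trajectory passes through all waypoints. -/
theorem waypoint_interpolation (umin umax y0 : ℝ)
    (humin : 0 < umin) (hbound : umin ≤ umax)
    (N : ℕ) (t z : Fin (N + 1) → ℝ)
    (hmono : Monotone t) (ht0 : t 0 = 0) (hz0 : z 0 = y0)
    (hstep : ∀ k : ℕ, ∀ hk : k + 1 ≤ N,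
      umin * (t ⟨k + 1, Nat.succ_lt_succ hk⟩ - t ⟨k, Nat.lt_succ_of_le (Nat.le_of_succ_le hk)⟩)
          ≤ z ⟨k + 1, Nat.succ_lt_succ hk⟩ - z ⟨k, Nat.lt_succ_of_le (Nat.le_of_succ_le hk)⟩ ∧
        z ⟨k + 1, Nat.succ_lt_succ hk⟩ - z ⟨k, Nat.lt_succ_of_le (Nat.le_of_succ_le hk)⟩
          ≤ umax * (t ⟨k + 1, Nat.succ_lt_succ hk⟩ - t ⟨k, Nat.lt_succ_of_le (Nat.le_of_succ_le hk)⟩)) :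
    ∃ u : ℝ → ℝ, Admissible umin umax u ∧
      ∀ k : Fin (N + 1), y0 + ∫ s in (0:ℝ)..t k, u s = z k :=
  waypoint_interpolation_general umin umax y0 hbound N t z hmono ht0 hz0 hstep
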